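/- arXiv:1412.3518 — 2 statements merged into one kernel-verified Lean document; each statement's English description precedes it below -/
import Mathlib

section
/- In Spohn's model with binary endogenous variables A, B, S, C, where A, B, S are determined by the context, C = (¬S ∧ A) ∨ (S ∧ B), and in context u we have A = B = S = 1 (so C = 1): A = 1 is an actual cause of C = 1 according to the HP definition (with witness W⃗ = {S}, setting S to 0). -/
open Classical

/-- A causal model over variable namespace ℕ (values are also coded as ℕ).
`V` is the finite set of endogenous variables; `F X ctx g` gives the value of the
structural equation for `X` given a context `ctx` (assignment to the exogenous
variables) and an assignment `g` to the endogenous variables. -/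
structure CM where
  V : Finset ℕ
  F : ℕ → (ℕ → ℕ) → (ℕ → ℕ) → ℕ

/-- `v` is a solution of all the structural equations of `M` in context `ctx`
(pinned to `0` outside `V` so that worlds are canonical). -/
def IsSol (M : CM) (ctx v : ℕ → ℕ) : Prop :=
  (∀ X ∈ M.V, v X = M.F X ctx v) ∧ ∀ X, X ∉ M.V → v X = 0

/-- `M` is recursive (acyclic): there is a total order on `V` such that each
equation depends only on strictly earlier endogenous variables. -/
def Recursive (M : CM) : Prop :=
  ∃ ord : ℕ → ℕ, Set.InjOn ord ↑M.V ∧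
    ∀ X ∈ M.V, ∀ ctx g h, (∀ Y ∈ M.V, ord Y < ord X → g Y = h Y) →
      M.F X ctx g = M.F X ctx h

/-- The model obtained by intervening according to the partial assignment `I`. -/
def CM.intervene (M : CM) (I : ℕ → Option ℕ) : CM :=
  ⟨M.V, fun X ctx g => (I X).getD (M.F X ctx g)⟩

/-- The intervention setting the variables in `S` to the values given by `f`. -/
def doSet (S : Finset ℕ) (f : ℕ → ℕ) : ℕ → Option ℕ :=
  fun Y => if Y ∈ S then some (f Y) else none

/-- `(M, ctx) ⊨ [I](X = x)`. -/
def Sat (M : CM) (ctx : ℕ → ℕ) (I : ℕ → Option ℕ) (X x : ℕ) : Prop :=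
  ∀ v, IsSol (M.intervene I) ctx v → v X = x

/-- Boolean combinations of primitive events `X = x`. -/
inductive BForm where
  | prim : ℕ → ℕ → BForm
  | not : BForm → BForm
  | and : BForm → BForm → BForm

def BForm.eval (v : ℕ → ℕ) : BForm → Prop
  | .prim X x => v X = x
  | .not φ => ¬ BForm.eval v φ
  | .and φ ψ => BForm.eval v φ ∧ BForm.eval v ψ

def BForm.vars : BForm → Finset ℕ
  | .prim X _ => {X}
  | .not φ => φ.vars
  | .and φ ψ => φ.vars ∪ ψ.vars

/-- `(M, ctx) ⊨ [I]φ`. -/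
def SatF (M : CM) (ctx : ℕ → ℕ) (I : ℕ → Option ℕ) (φ : BForm) : Prop :=
  ∀ v, IsSol (M.intervene I) ctx v → φ.eval v

/-- `M'` is a conservative extension of `M`: same exogenous variables (shared
namespace), `M.V ⊆ M'.V`, and for every context, every `X ∈ M.V`, and every
setting of the other variables of `M`, the intervened value of `X` agrees. -/
def ConsExt (M M' : CM) : Prop :=
  M.V ⊆ M'.V ∧
  ∀ ctx x, ∀ X ∈ M.V, ∀ w : ℕ → ℕ,
    (Sat M ctx (doSet (M.V.erase X) w) X x ↔ Sat M' ctx (doSet (M.V.erase X) w) X x)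

/-- The intervention `X⃗ ← x⃗', W⃗ ← w⃗` used in AC2(a). -/
def witI (Xs : Finset ℕ) (x' : ℕ → ℕ) (W : Finset ℕ) (w : ℕ → ℕ) : ℕ → Option ℕ :=
  fun Y => if Y ∈ Xs then some (x' Y) else if Y ∈ W then some (w Y) else none

/-- The intervention `X⃗ ← x⃗, Z⃗' ← z⃗, W⃗' ← w⃗` used in AC2(b) (here `vs` is the
actual solution, providing the actual values `z⃗`). -/
def acbI (Xs : Finset ℕ) (xv : ℕ → ℕ) (Z' : Finset ℕ) (vs : ℕ → ℕ)
    (W' : Finset ℕ) (w : ℕ → ℕ) : ℕ → Option ℕ :=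
  fun Y => if Y ∈ Xs then some (xv Y) else if Y ∈ Z' then some (vs Y)
    else if Y ∈ W' then some (w Y) else none

/-- `(W, w, x')` is a witness for AC2 (updated version, with AC2(b)). -/
def Wit (M : CM) (ctx : ℕ → ℕ) (Xs : Finset ℕ) (xv : ℕ → ℕ) (φ : BForm)
    (W : Finset ℕ) (w x' : ℕ → ℕ) : Prop :=
  W ⊆ M.V ∧ Xs ⊆ M.V \ W ∧
  SatF M ctx (witI Xs x' W w) (BForm.not φ) ∧
  ∀ vs, IsSol M ctx vs → ∀ W' ⊆ W, ∀ Z' ⊆ M.V \ W,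
    SatF M ctx (acbI Xs xv Z' vs W' w) φ

/-- `(W, w, x')` is a witness for AC2 in the original HP sense (with AC2(b'):
only `W` itself, not its subsets, is set to `w`). -/
def Wit' (M : CM) (ctx : ℕ → ℕ) (Xs : Finset ℕ) (xv : ℕ → ℕ) (φ : BForm)
    (W : Finset ℕ) (w x' : ℕ → ℕ) : Prop :=
  W ⊆ M.V ∧ Xs ⊆ M.V \ W ∧
  SatF M ctx (witI Xs x' W w) (BForm.not φ) ∧
  ∀ vs, IsSol M ctx vs → ∀ Z' ⊆ M.V \ W,
    SatF M ctx (acbI Xs xv Z' vs W w) φ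

/-- AC1: `X⃗ = x⃗` and `φ` hold in the actual world. -/
def AC1 (M : CM) (ctx : ℕ → ℕ) (Xs : Finset ℕ) (xv : ℕ → ℕ) (φ : BForm) : Prop :=
  ∀ v, IsSol M ctx v → (∀ X ∈ Xs, v X = xv X) ∧ φ.eval v

def PreCause (M : CM) (ctx : ℕ → ℕ) (Xs : Finset ℕ) (xv : ℕ → ℕ) (φ : BForm) : Prop :=
  AC1 M ctx Xs xv φ ∧ ∃ W w x', Wit M ctx Xs xv φ W w x'

/-- The (updated) HP definition of actual cause: AC1 ∧ AC2 ∧ AC3. -/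
def IsCause (M : CM) (ctx : ℕ → ℕ) (Xs : Finset ℕ) (xv : ℕ → ℕ) (φ : BForm) : Prop :=
  PreCause M ctx Xs xv φ ∧ ∀ Xs' ⊂ Xs, ¬ PreCause M ctx Xs' xv φ

def PreCause' (M : CM) (ctx : ℕ → ℕ) (Xs : Finset ℕ) (xv : ℕ → ℕ) (φ : BForm) : Prop :=
  AC1 M ctx Xs xv φ ∧ ∃ W w x', Wit' M ctx Xs xv φ W w x'

/-- The original HP definition of actual cause (with AC2(b')). -/
def IsCause' (M : CM) (ctx : ℕ → ℕ) (Xs : Finset ℕ) (xv : ℕ → ℕ) (φ : BForm) : Prop :=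
  PreCause' M ctx Xs xv φ ∧ ∀ Xs' ⊂ Xs, ¬ PreCause' M ctx Xs' xv φ

/-- An extended causal model: a causal model with a normality preorder on worlds. -/
structure ECM extends CM where
  normGE : (ℕ → ℕ) → (ℕ → ℕ) → Prop
  normGE_refl : ∀ s, normGE s s
  normGE_trans : ∀ s t u, normGE s t → normGE t u → normGE s u

/-- A world of `M`: an assignment to the endogenous variables (canonically `0` elsewhere). -/
def World (M : CM) (s : ℕ → ℕ) : Prop := ∀ X, X ∉ M.V → s X = 0

/-- The world determined by the intervention `I` in context `ctx` is at least as
normal as the actual world `s_ctx`. -/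
def NormAbove (M : ECM) (ctx : ℕ → ℕ) (I : ℕ → Option ℕ) : Prop :=
  ∀ s su, IsSol (M.toCM.intervene I) ctx s → IsSol M.toCM ctx su → M.normGE s su

/-- Witness for the extended HP definition: AC2 together with AC2(a⁺). -/
def EWit (M : ECM) (ctx : ℕ → ℕ) (Xs : Finset ℕ) (xv : ℕ → ℕ) (φ : BForm)
    (W : Finset ℕ) (w x' : ℕ → ℕ) : Prop :=
  Wit M.toCM ctx Xs xv φ W w x' ∧ NormAbove M ctx (witI Xs x' W w)

def EPreCause (M : ECM) (ctx : ℕ → ℕ) (Xs : Finset ℕ) (xv : ℕ → ℕ) (φ : BForm) : Prop :=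
  AC1 M.toCM ctx Xs xv φ ∧ ∃ W w x', EWit M ctx Xs xv φ W w x'

/-- The extended (normality-sensitive) HP definition of actual cause. -/
def EIsCause (M : ECM) (ctx : ℕ → ℕ) (Xs : Finset ℕ) (xv : ℕ → ℕ) (φ : BForm) : Prop :=
  EPreCause M ctx Xs xv φ ∧ ∀ Xs' ⊂ Xs, ¬ EPreCause M ctx Xs' xv φ

/-- In world `s`, variable `v0` takes on a value other than that specified by
the equations of `M` in context `ctx`. -/
def Deviates (M : CM) (ctx : ℕ → ℕ) (v0 : ℕ) (s : ℕ → ℕ) : Prop :=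
  ∀ v, IsSol (M.intervene (doSet (M.V.erase v0) s)) ctx v → v v0 ≠ s v0

/-- `(M, ctx)` respects the equations for `v0`: any world in which `v0` deviates
from its equation-determined value is not at least as normal as the actual world. -/
def Respects (M : ECM) (ctx : ℕ → ℕ) (v0 : ℕ) : Prop :=
  ∀ s, World M.toCM s → Deviates M.toCM ctx v0 s →
    ∀ su, IsSol M.toCM ctx su → ¬ M.normGE s su

/-- Conservative extension of extended causal models: conservative extension of
the underlying models plus condition CE on the normality preorders. -/
def EConsExt (M M' : ECM) : Prop :=
  ConsExt M.toCM M'.toCM ∧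
  ∀ ctx (W : Finset ℕ), W ⊆ M.V → ∀ w : ℕ → ℕ,
    (NormAbove M ctx (doSet W w) ↔ NormAbove M' ctx (doSet W w))

/-- Indicator of a proposition, used to express Boolean structural equations. -/
noncomputable def bI (p : Prop) : ℕ := if p then 1 else 0

/-- Spohn's model: A = 0, B = 1, S = 2, C = 3; A, B, S set by the context,
C = (¬S ∧ A) ∨ (S ∧ B). -/
noncomputable def MSp : CM :=
  ⟨{0, 1, 2, 3}, fun X ctx g =>
    if X = 3 then bI ((g 2 = 0 ∧ g 0 = 1) ∨ (g 2 = 1 ∧ g 1 = 1)) else ctx X⟩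

/-! For the empty conjunction of events, the interventions of AC2(a) and of AC2(b) with
`W' = W`, `Z' = ∅` coincide, so the two clauses contradict each other once that intervention has
a solution; hence in a model where every intervention has a solution, AC3 is automatic for a
single event. In Spohn's model, with `A ← 1` and `B = 1` the equation for `C` gives `C = 1`
whatever value `S` takes, which is AC2(b); setting `A ← 0, S ← 0` makes `C = 0`, which is
AC2(a). -/

section General

@[simp]
lemma CM.intervene_V (M : CM) (I : ℕ → Option ℕ) : (M.intervene I).V = M.V := rfl

variable {M : CM} {ctx : ℕ → ℕ} {xv : ℕ → ℕ} {φ : BForm}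

lemma witI_empty_eq_acbI (x' : ℕ → ℕ) (W : Finset ℕ) (w : ℕ → ℕ) (xv vs : ℕ → ℕ) :
    witI ∅ x' W w = acbI ∅ xv ∅ vs W w := by
  funext Y
  simp [witI, acbI]

lemma not_preCause_empty (hsol : ∀ I, ∃ v, IsSol (M.intervene I) ctx v) :
    ¬ PreCause M ctx ∅ xv φ := by
  rintro ⟨-, W, w, x', -, -, hnot, hpos⟩
  obtain ⟨vs, hvs⟩ := hsol fun _ => none
  obtain ⟨v, hv⟩ := hsol (witI ∅ x' W w)
  have hφ := hpos vs hvs W subset_rfl ∅ (Finset.empty_subset _) v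
  rw [← witI_empty_eq_acbI] at hφ
  exact hnot v hv (hφ hv)

lemma isCause_singleton_iff (hsol : ∀ I, ∃ v, IsSol (M.intervene I) ctx v) (X : ℕ) :
    IsCause M ctx {X} xv φ ↔ PreCause M ctx {X} xv φ := by
  refine ⟨And.left, fun h => ⟨h, fun Xs hXs => ?_⟩⟩
  rw [Finset.ssubset_singleton_iff.mp hXs]
  exact not_preCause_empty hsol

end General

section Spohn

lemma MSp_V : MSp.V = {0, 1, 2, 3} := rfl

noncomputable def mspSol (I : ℕ → Option ℕ) (ctx : ℕ → ℕ) (X : ℕ) : ℕ :=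
  if X = 3 then
    (I 3).getD (bI (((I 2).getD (ctx 2) = 0 ∧ (I 0).getD (ctx 0) = 1) ∨
      ((I 2).getD (ctx 2) = 1 ∧ (I 1).getD (ctx 1) = 1)))
  else if X ∈ MSp.V then (I X).getD (ctx X) else 0

lemma isSol_MSp_intervene_iff {I : ℕ → Option ℕ} {ctx v : ℕ → ℕ} :
    IsSol (MSp.intervene I) ctx v ↔ v = mspSol I ctx := by
  constructor
  · rintro ⟨heq, hout⟩
    simp only [CM.intervene_V, MSp_V, Finset.mem_insert, Finset.mem_singleton] at heq hout
    have h0 := heq 0 (by simp)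
    have h1 := heq 1 (by simp)
    have h2 := heq 2 (by simp)
    have h3 := heq 3 (by simp)
    simp only [MSp, CM.intervene] at h0 h1 h2 h3
    funext X
    by_cases hX : X = 0 ∨ X = 1 ∨ X = 2 ∨ X = 3
    · rcases hX with rfl | rfl | rfl | rfl <;> simp_all [mspSol, MSp_V]
    · simp_all [mspSol, MSp_V]
  · rintro rfl
    constructor
    · intro X hX
      simp only [CM.intervene_V, MSp_V, Finset.mem_insert, Finset.mem_singleton] at hX
      rcases hX with rfl | rfl | rfl | rfl <;> simp [mspSol, MSp, CM.intervene]
    · intro X hX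
      rw [CM.intervene_V] at hX
      have h3 : X ≠ 3 := by rintro rfl; simp [MSp_V] at hX
      simp [mspSol, h3, hX]

lemma satF_MSp_iff {I : ℕ → Option ℕ} {ctx : ℕ → ℕ} {φ : BForm} :
    SatF MSp ctx I φ ↔ φ.eval (mspSol I ctx) := by
  simp [SatF, isSol_MSp_intervene_iff]

lemma isSol_MSp_iff {ctx v : ℕ → ℕ} : IsSol MSp ctx v ↔ v = mspSol (fun _ => none) ctx :=
  isSol_MSp_intervene_iff (I := fun _ => none)

lemma exists_isSol_MSp_intervene (ctx : ℕ → ℕ) (I : ℕ → Option ℕ) :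
    ∃ v, IsSol (MSp.intervene I) ctx v :=
  ⟨_, isSol_MSp_intervene_iff.mpr rfl⟩

lemma wit_spohn_A :
    Wit MSp (fun _ => 1) {0} (fun _ => 1) (.prim 3 1) {2} (fun _ => 0) (fun _ => 0) := by
  refine ⟨by simp [MSp_V], by simp [MSp_V], ?_, ?_⟩
  · simp [satF_MSp_iff, BForm.eval, mspSol, witI, bI]
  · intro vs hvs W' hW' Z' hZ'
    rw [isSol_MSp_iff] at hvs
    subst hvs
    have h2Z : 2 ∉ Z' := fun h => by simpa using hZ' h
    have h1W : 1 ∉ W' := fun h => by simpa using hW' h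
    have h3W : 3 ∉ W' := fun h => by simpa using hW' h
    rw [satF_MSp_iff]
    by_cases h3Z : 3 ∈ Z' <;> by_cases h1Z : 1 ∈ Z' <;> by_cases h2W : 2 ∈ W' <;>
      simp [BForm.eval, mspSol, acbI, bI, MSp_V, *]

end Spohn

/-- in Spohn's model, in the context with A = B = S = 1, A = 1 is an
actual cause of C = 1, with witness W⃗ = {S}, S ← 0 (and A ← 0). -/
theorem spohn_A_cause :
    IsCause MSp (fun _ => 1) {0} (fun _ => 1) (.prim 3 1) ∧
    Wit MSp (fun _ => 1) {0} (fun _ => 1) (.prim 3 1) {2} (fun _ => 0) (fun _ => 0) := by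
  have ac1 : AC1 MSp (fun _ => 1) {0} (fun _ => 1) (.prim 3 1) := by
    intro v hv
    rw [isSol_MSp_iff] at hv
    subst hv
    simp [BForm.eval, mspSol, MSp_V, bI]
  refine ⟨?_, wit_spohn_A⟩
  rw [isCause_singleton_iff (exists_isSol_MSp_intervene _)]
  exact ⟨ac1, _, _, _, wit_spohn_A⟩
end

section
/- Let M and M' be extended causal models such that M' is a conservative extension of M, X⃗ = x⃗ is not an actual cause of φ in (M, u⃗) under the extended (normality-sensitive) HP definition, and (M', u⃗) respects the equations for every endogenous variable of M' not in M. Then either X⃗ = x⃗ is not an actual cause of φ in (M', u⃗), or there is a strict subset X⃗₁ of X⃗ such that X⃗₁ = x⃗₁ is an actual cause of φ in (M, u⃗), where x⃗₁ is the restriction of x⃗ to X⃗₁. -/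
open Classical

/-!
A witness `(W⃗, w⃗, x⃗')` for `X⃗ = x⃗` in `M'` can be cut down to `W⃗ ∩ V`: the witness world is at
least as normal as the actual one, so, as `M'` respects the equations for the new variables, the
new variables of `W⃗` already take their equation-determined values there and freeing them does
not change that world. The cut-down witness only sets variables of `M`, and by conservativity an
intervention on variables of `M` has the same effect on `V` in `M` and in `M'`; with CE it is
therefore a witness for AC2 and AC2(a⁺) in `M`. So if `X⃗ = x⃗` is a cause in `M'`, it satisfies
AC1 and AC2 in `M`; not being a cause there, it violates AC3, and a minimal strict subset
satisfying AC1 and AC2 is a cause in `M`.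
-/

theorem BForm.eval_congr {v v' : ℕ → ℕ} (φ : BForm) (h : ∀ X ∈ φ.vars, v X = v' X) :
    φ.eval v ↔ φ.eval v' := by
  induction φ with
  | prim X x => exact iff_of_eq (congrArg (· = x) (h X (Finset.mem_singleton_self X)))
  | not ψ ih => exact not_congr (ih h)
  | and ψ χ ih₁ ih₂ =>
    exact and_congr (ih₁ fun X hX => h X (Finset.mem_union_left _ hX))
      (ih₂ fun X hX => h X (Finset.mem_union_right _ hX))

theorem witI_eq_doSet (Xs : Finset ℕ) (x' : ℕ → ℕ) (W : Finset ℕ) (w : ℕ → ℕ) :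
    witI Xs x' W w = doSet (Xs ∪ W) (fun Y => if Y ∈ Xs then x' Y else w Y) := by
  funext Y
  by_cases h₁ : Y ∈ Xs
  · simp [witI, doSet, h₁]
  · by_cases h₂ : Y ∈ W <;> simp [witI, doSet, h₁, h₂]

section Recursive

variable {M : CM} {ctx : ℕ → ℕ}

theorem CM.intervene_none (M : CM) : M.intervene (fun _ => none) = M := rfl

def CM.step (M : CM) (ctx g : ℕ → ℕ) : ℕ → ℕ := fun X => if X ∈ M.V then M.F X ctx g else 0

theorem World.ext {s t : ℕ → ℕ} (hs : World M s) (ht : World M t)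
    (h : ∀ X ∈ M.V, s X = t X) : s = t := by
  funext X
  by_cases hX : X ∈ M.V
  · exact h X hX
  · rw [hs X hX, ht X hX]

theorem CM.isSol_of_step_eq {v : ℕ → ℕ} (h : M.step ctx v = v) : IsSol M ctx v :=
  ⟨fun X hX => (congrFun h X).symm.trans (if_pos hX),
    fun X hX => (congrFun h X).symm.trans (if_neg hX)⟩

theorem CM.step_iterate_succ_apply_of_lt {ord : ℕ → ℕ}
    (hord : ∀ X ∈ M.V, ∀ ctx g h, (∀ Y ∈ M.V, ord Y < ord X → g Y = h Y) →
      M.F X ctx g = M.F X ctx h) (g : ℕ → ℕ) :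
    ∀ k, ∀ X ∈ M.V, ord X < k → (M.step ctx)^[k + 1] g X = (M.step ctx)^[k] g X := by
  intro k
  induction k with
  | zero => intro X _ h; omega
  | succ k ih =>
    intro X hX h
    calc (M.step ctx)^[k + 1 + 1] g X = M.step ctx ((M.step ctx)^[k + 1] g) X := by
          rw [Function.iterate_succ_apply']
      _ = M.step ctx ((M.step ctx)^[k] g) X := by
          simp only [CM.step, if_pos hX]
          exact hord X hX ctx _ _ fun Y hY hlt => ih Y hY (by omega)
      _ = (M.step ctx)^[k + 1] g X := by rw [Function.iterate_succ_apply']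

theorem Recursive.intervene (hM : Recursive M) (I : ℕ → Option ℕ) :
    Recursive (M.intervene I) := by
  obtain ⟨ord, hinj, hord⟩ := hM
  refine ⟨ord, hinj, fun X hX ctx g h hgh => ?_⟩
  cases hIX : I X with
  | none => simpa [CM.intervene, hIX] using hord X hX ctx g h hgh
  | some c => simp [CM.intervene, hIX]

/-- The equations stabilise after `1 + max ord` rounds of `step`. -/
theorem Recursive.exists_isSol (hM : Recursive M) (ctx : ℕ → ℕ) : ∃ v, IsSol M ctx v := by
  obtain ⟨ord, -, hord⟩ := hM
  have hfix :
      M.step ctx ((M.step ctx)^[M.V.sup ord + 1] 0) = (M.step ctx)^[M.V.sup ord + 1] 0 := by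
    funext X
    by_cases hX : X ∈ M.V
    · rw [← Function.iterate_succ_apply' (M.step ctx)]
      exact CM.step_iterate_succ_apply_of_lt hord 0 _ X hX
        (Nat.lt_succ_of_le (Finset.le_sup hX))
    · rw [Function.iterate_succ_apply']
      simp [CM.step, hX]
  exact ⟨_, CM.isSol_of_step_eq hfix⟩

theorem Recursive.isSol_unique (hM : Recursive M) {v w : ℕ → ℕ} (hv : IsSol M ctx v)
    (hw : IsSol M ctx w) : v = w := by
  obtain ⟨ord, -, hord⟩ := hM
  have hlt : ∀ n, ∀ X ∈ M.V, ord X < n → v X = w X := by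
    intro n
    induction n with
    | zero => intro X _ h; omega
    | succ n ih =>
      intro X hX h
      rw [hv.1 X hX, hw.1 X hX]
      exact hord X hX ctx v w fun Y hY hYX => ih Y hY (by omega)
  exact World.ext hv.2 hw.2 fun X hX => hlt _ X hX (Nat.lt_succ_self _)

theorem Recursive.sat_of_isSol (hM : Recursive M) {I : ℕ → Option ℕ} {v : ℕ → ℕ}
    (hv : IsSol (M.intervene I) ctx v) (X : ℕ) : Sat M ctx I X (v X) := fun _ hu => by
  rw [(hM.intervene I).isSol_unique hu hv]

theorem Recursive.satF_iff (hM : Recursive M) {I : ℕ → Option ℕ} {s : ℕ → ℕ}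
    (hs : IsSol (M.intervene I) ctx s) (φ : BForm) : SatF M ctx I φ ↔ φ.eval s :=
  ⟨fun h => h s hs, fun h _ hu => (hM.intervene I).isSol_unique hu hs ▸ h⟩

theorem IsSol.intervene_doSet {I : ℕ → Option ℕ} {S : Finset ℕ} {v : ℕ → ℕ}
    (hv : IsSol (M.intervene I) ctx v) (hS : ∀ Z, Z ∉ S → I Z = none) :
    IsSol (M.intervene (doSet S v)) ctx v := by
  refine ⟨fun Z hZ => ?_, hv.2⟩
  by_cases hZS : Z ∈ S
  · simp [CM.intervene, doSet, hZS]
  · simpa [CM.intervene, doSet, hZS, hS Z hZS] using hv.1 Z hZ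

theorem IsSol.witI_inter {Xs W S : Finset ℕ} {x' w s : ℕ → ℕ}
    (hs : IsSol (M.intervene (witI Xs x' W w)) ctx s)
    (hfree : ∀ Z ∈ W, Z ∉ S → s Z = M.F Z ctx s) :
    IsSol (M.intervene (witI Xs x' (W ∩ S) w)) ctx s := by
  refine ⟨fun Z hZ => ?_, hs.2⟩
  have hZeq := hs.1 Z hZ
  by_cases hZX : Z ∈ Xs
  · simpa [CM.intervene, witI, hZX] using hZeq
  by_cases hZW : Z ∈ W
  · by_cases hZS : Z ∈ S
    · simpa [CM.intervene, witI, hZX, hZW, hZS] using hZeq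
    · simpa [CM.intervene, witI, hZX, hZS] using hfree Z hZW hZS
  · simpa [CM.intervene, witI, hZX, hZW] using hZeq

end Recursive

namespace ConsExt

variable {M M' : CM} {ctx : ℕ → ℕ} {I : ℕ → Option ℕ}

/-- Restricting a solution of `M'` to `V` gives a solution of `M`: at an unintervened `Y ∈ V`,
fixing every other variable of `M` to its value leaves `Y` with the same value in `M'`, hence,
by conservativity, in `M`. -/
theorem isSol_indicator (hext : ConsExt M M') (hM : Recursive M) (hM' : Recursive M')
    (hI : ∀ Y, Y ∉ M.V → I Y = none) {v' : ℕ → ℕ} (hv' : IsSol (M'.intervene I) ctx v') :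
    IsSol (M.intervene I) ctx ((↑M.V : Set ℕ).indicator v') := by
  set ws := (↑M.V : Set ℕ).indicator v'
  have hws_out : World M ws := fun Z hZ => Set.indicator_of_notMem (Finset.mem_coe.not.2 hZ) _
  refine ⟨fun Y hY => ?_, hws_out⟩
  have hwsY : ws Y = v' Y := Set.indicator_of_mem (Finset.mem_coe.2 hY) _
  cases hIY : I Y with
  | some c => simpa [CM.intervene, hIY, hwsY] using hv'.1 Y (hext.1 hY)
  | none =>
    have hfix : IsSol (M'.intervene (doSet (M.V.erase Y) v')) ctx v' :=
      hv'.intervene_doSet fun Z hZ => by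
        by_cases hZY : Z = Y
        · rw [hZY, hIY]
        · exact hI Z fun hZM => hZ (Finset.mem_erase.2 ⟨hZY, hZM⟩)
    have hSat := (hext.2 ctx (v' Y) Y hY v').2 (hM'.sat_of_isSol hfix Y)
    obtain ⟨u, hu⟩ := (hM.intervene (doSet (M.V.erase Y) v')).exists_isSol ctx
    have hu_eq : u = ws := World.ext (M := M) hu.2 hws_out fun Z hZ => by
      by_cases hZY : Z = Y
      · subst hZY
        rw [hSat u hu, hwsY]
      · simpa [CM.intervene, doSet, hZY, hZ, ws] using hu.1 Z hZ
    rw [← hu_eq]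
    simpa [CM.intervene, doSet, hIY] using hu.1 Y hY

theorem isSol_agree (hext : ConsExt M M') (hM : Recursive M) (hM' : Recursive M')
    (hI : ∀ Y, Y ∉ M.V → I Y = none) {v v' : ℕ → ℕ} (hv : IsSol (M.intervene I) ctx v)
    (hv' : IsSol (M'.intervene I) ctx v') : ∀ X ∈ M.V, v X = v' X := by
  intro X hX
  rw [(hM.intervene I).isSol_unique hv (hext.isSol_indicator hM hM' hI hv'),
    Set.indicator_of_mem (Finset.mem_coe.2 hX)]

theorem isSol_agree_actual (hext : ConsExt M M') (hM : Recursive M) (hM' : Recursive M')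
    {v v' : ℕ → ℕ} (hv : IsSol M ctx v) (hv' : IsSol M' ctx v') : ∀ X ∈ M.V, v X = v' X :=
  hext.isSol_agree hM hM' (I := fun _ => none) (fun _ _ => rfl)
    (by rwa [CM.intervene_none]) (by rwa [CM.intervene_none])

theorem satF (hext : ConsExt M M') (hM : Recursive M) (hM' : Recursive M')
    (hI : ∀ Y, Y ∉ M.V → I Y = none) {φ : BForm} (hφ : φ.vars ⊆ M.V)
    (h : SatF M' ctx I φ) : SatF M ctx I φ := by
  intro v hv
  obtain ⟨v', hv'⟩ := (hM'.intervene I).exists_isSol ctx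
  exact (φ.eval_congr fun X hX => hext.isSol_agree hM hM' hI hv hv' X (hφ hX)).2 (h v' hv')

theorem ac1 (hext : ConsExt M M') (hM : Recursive M) (hM' : Recursive M') {Xs : Finset ℕ}
    (hXs : Xs ⊆ M.V) {xv : ℕ → ℕ} {φ : BForm} (hφ : φ.vars ⊆ M.V)
    (h : AC1 M' ctx Xs xv φ) : AC1 M ctx Xs xv φ := by
  intro v hv
  obtain ⟨v', hv'⟩ := hM'.exists_isSol ctx
  have hagree := hext.isSol_agree_actual hM hM' hv hv'
  obtain ⟨hx, hφv'⟩ := h v' hv'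
  exact ⟨fun X hX => (hagree X (hXs hX)).trans (hx X hX),
    (φ.eval_congr fun X hX => hagree X (hφ hX)).2 hφv'⟩

/-- AC2(b) for `W⃗` in `M'` gives AC2(b) for `W⃗ ∩ V` in `M`: the variables `Z⃗'` held at their
actual values then avoid all of `W⃗`, and their actual values agree in `M` and `M'`. -/
theorem acb (hext : ConsExt M M') (hM : Recursive M) (hM' : Recursive M') {Xs W : Finset ℕ}
    (hXs : Xs ⊆ M.V) {xv w : ℕ → ℕ} {φ : BForm} (hφ : φ.vars ⊆ M.V)
    (h : ∀ vs, IsSol M' ctx vs → ∀ W'' ⊆ W, ∀ Z' ⊆ M'.V \ W,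
      SatF M' ctx (acbI Xs xv Z' vs W'' w) φ) :
    ∀ vs, IsSol M ctx vs → ∀ W'' ⊆ W ∩ M.V, ∀ Z' ⊆ M.V \ (W ∩ M.V),
      SatF M ctx (acbI Xs xv Z' vs W'' w) φ := by
  intro vs hvs W'' hW'' Z' hZ'
  obtain ⟨vs', hvs'⟩ := hM'.exists_isSol ctx
  have hZ'M : Z' ⊆ M.V := hZ'.trans Finset.sdiff_subset
  have hI : acbI Xs xv Z' vs W'' w = acbI Xs xv Z' vs' W'' w := by
    funext Y
    by_cases hY : Y ∈ Z'
    · simp [acbI, hY, hext.isSol_agree_actual hM hM' hvs hvs' Y (hZ'M hY)]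
    · simp [acbI, hY]
  have hZ'W : Z' ⊆ M'.V \ W := fun Y hY => Finset.mem_sdiff.2
    ⟨hext.1 (hZ'M hY), fun hYW => (Finset.mem_sdiff.1 (hZ' hY)).2
      (Finset.mem_inter.2 ⟨hYW, hZ'M hY⟩)⟩
  rw [hI]
  refine hext.satF hM hM' (fun Y hY => ?_) hφ
    (h vs' hvs' W'' (hW''.trans Finset.inter_subset_left) Z' hZ'W)
  have h₁ : Y ∉ Xs := fun h => hY (hXs h)
  have h₂ : Y ∉ Z' := fun h => hY (hZ'M h)
  have h₃ : Y ∉ W'' := fun h => hY ((Finset.mem_inter.1 (hW'' h)).2)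
  simp [acbI, h₁, h₂, h₃]

end ConsExt

section Normality

variable {M : ECM} {ctx : ℕ → ℕ}

theorem Respects.eq_F_of_normGE {v₀ : ℕ} (hresp : Respects M ctx v₀) (hv₀ : v₀ ∈ M.V)
    {s su : ℕ → ℕ} (hs : World M.toCM s) (hsu : IsSol M.toCM ctx su)
    (hge : M.normGE s su) : s v₀ = M.F v₀ ctx s := by
  by_contra hne
  refine hresp s hs (fun t ht htv₀ => hne ?_) su hsu hge
  have hts : t = s := World.ext (M := M.toCM) ht.2 hs fun Z hZ => by
    by_cases hZv : Z = v₀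
    · rw [hZv, htv₀]
    · simpa [CM.intervene, doSet, hZv, hZ] using ht.1 Z hZ
  have htF := ht.1 v₀ hv₀
  simp only [CM.intervene, doSet, Finset.notMem_erase, if_false, Option.getD_none] at htF
  rw [← htv₀, htF, hts]

/-- The witness world for `W⃗` is also the one for `W⃗ ∩ S`: being at least as normal as the actual
world, it satisfies the equations of the variables outside `S`. -/
theorem witI_inter_of_respects (hM : Recursive M.toCM) {S : Finset ℕ}
    (hresp : ∀ v₀ ∈ M.V \ S, Respects M ctx v₀) {Xs W : Finset ℕ} (hW : W ⊆ M.V)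
    {x' w : ℕ → ℕ} {φ : BForm} (hnot : SatF M.toCM ctx (witI Xs x' W w) (.not φ))
    (hnorm : NormAbove M ctx (witI Xs x' W w)) :
    SatF M.toCM ctx (witI Xs x' (W ∩ S) w) (.not φ) ∧
      NormAbove M ctx (witI Xs x' (W ∩ S) w) := by
  obtain ⟨s, hs⟩ := (hM.intervene (witI Xs x' W w)).exists_isSol ctx
  obtain ⟨su, hsu⟩ := hM.exists_isSol ctx
  have hs_inter : IsSol (M.toCM.intervene (witI Xs x' (W ∩ S) w)) ctx s :=
    hs.witI_inter fun Z hZ hZS => (hresp Z (Finset.mem_sdiff.2 ⟨hW hZ, hZS⟩)).eq_F_of_normGE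
      (hW hZ) hs.2 hsu (hnorm s su hs hsu)
  refine ⟨(hM.satF_iff hs_inter _).2 ((hM.satF_iff hs _).1 hnot), fun t su' ht hsu' => ?_⟩
  rw [(hM.intervene _).isSol_unique ht hs_inter]
  exact hnorm s su' hs hsu'

end Normality

theorem EPreCause.of_eConsExt {M M' : ECM} (hM : Recursive M.toCM) (hM' : Recursive M'.toCM)
    (hext : EConsExt M M') {ctx : ℕ → ℕ} {Xs : Finset ℕ} (hXs : Xs ⊆ M.V) {xv : ℕ → ℕ}
    {φ : BForm} (hφ : φ.vars ⊆ M.V) (hresp : ∀ v₀ ∈ M'.V \ M.V, Respects M' ctx v₀)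
    (h : EPreCause M' ctx Xs xv φ) : EPreCause M ctx Xs xv φ := by
  obtain ⟨hAC1, W, w, x', ⟨hW, hXsW, hnot, hacb⟩, hnorm⟩ := h
  obtain ⟨hnot', hnorm'⟩ := witI_inter_of_respects hM' hresp hW hnot hnorm
  have hWM : W ∩ M.V ⊆ M.V := Finset.inter_subset_right
  have hsupp : ∀ Y, Y ∉ M.V → witI Xs x' (W ∩ M.V) w Y = none := fun Y hY => by
    simp [witI, hY, show Y ∉ Xs from fun h => hY (hXs h)]
  have hXsW' : Xs ⊆ M.V \ (W ∩ M.V) := fun X hX => Finset.mem_sdiff.2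
    ⟨hXs hX, fun h => (Finset.mem_sdiff.1 (hXsW hX)).2 (Finset.mem_inter.1 h).1⟩
  refine ⟨hext.1.ac1 hM hM' hXs hφ hAC1, W ∩ M.V, w, x',
    ⟨hWM, hXsW', hext.1.satF hM hM' hsupp hφ hnot', hext.1.acb hM hM' hXs hφ hacb⟩, ?_⟩
  rw [witI_eq_doSet] at hnorm' ⊢
  exact (hext.2 ctx _ (Finset.union_subset hXs hWM) _).2 hnorm'

/-- stability of non-causality under conservative extensions that
respect the equations for the new variables: either X⃗ = x⃗ remains a non-cause
in M', or some strict subset of X⃗ is already a cause in M. -/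
theorem stability (M M' : ECM) (hM : Recursive M.toCM) (hM' : Recursive M'.toCM)
    (hext : EConsExt M M') (ctx : ℕ → ℕ) (Xs : Finset ℕ) (hXs : Xs ⊆ M.V)
    (xv : ℕ → ℕ) (φ : BForm) (hφ : φ.vars ⊆ M.V)
    (hnc : ¬ EIsCause M ctx Xs xv φ)
    (hresp : ∀ v0 ∈ M'.V \ M.V, Respects M' ctx v0) :
    ¬ EIsCause M' ctx Xs xv φ ∨ ∃ Xs' ⊂ Xs, EIsCause M ctx Xs' xv φ := by
  by_cases hpre : EPreCause M ctx Xs xv φ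
  · obtain ⟨Ys, hYs, hmin⟩ := exists_minimal_le_of_wellFoundedLT (EPreCause M ctx · xv φ) Xs hpre
    have hcause : EIsCause M ctx Ys xv φ := ⟨hmin.prop, fun _ hlt => hmin.not_prop_of_lt hlt⟩
    refine Or.inr ⟨Ys, hYs.lt_of_ne ?_, hcause⟩
    rintro rfl
    exact hnc hcause
  · exact Or.inl fun hcause => hpre (hcause.1.of_eConsExt hM hM' hext hXs hφ hresp)
end
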